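/- Let A = [A_{ij}] be an N×N block real matrix with blocks A_{ij} ∈ ℝ^{n_i×n_j}. Suppose there exist symmetric positive definite matrices P_i ∈ ℝ^{n_i×n_i} (i = 1,…,N) such that, defining the symmetric block matrix W = [W_{ij}] by W_{ij} := −A_{ji}ᵀP_j − P_i A_{ij}, the diagonal pivots Ŵ_{ii} of the block Cholesky recursion applied to W are positive definite for all i = 1,…,N. Then A is Hurwitz (so the networked system ẋ = Ax is globally exponentially stable). -/

import Mathlib

open Matrix

/-- The full matrix assembled from an `N × N` family of blocks
(`W i j` is the `(i,j)`-th block, of size `n i × n j`). -/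
def ofBlocks {N : ℕ} {n : Fin N → ℕ}
    (W : ∀ i j : Fin N, Matrix (Fin (n i)) (Fin (n j)) ℝ) :
    Matrix ((i : Fin N) × Fin (n i)) ((j : Fin N) × Fin (n j)) ℝ :=
  Matrix.of fun a b => W a.1 b.1 a.2 b.2

/-- The block Cholesky recursion:
`Ŵ i j = W i j − Σ_{k < j} Ŵ i k ⬝ (Ŵ k k)⁻¹ ⬝ (Ŵ j k)ᵀ`. -/
noncomputable def chol {N : ℕ} {n : Fin N → ℕ}
    (W : ∀ i j : Fin N, Matrix (Fin (n i)) (Fin (n j)) ℝ)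
    (i j : Fin N) : Matrix (Fin (n i)) (Fin (n j)) ℝ :=
  W i j - ∑ k : Fin N,
    if h : (k : ℕ) < (j : ℕ) then
      chol W i k * (chol W k k)⁻¹ * (chol W j k)ᵀ
    else 0
termination_by (j : ℕ)
decreasing_by all_goals exact h

/-- A real square matrix is Hurwitz if every root in `ℂ` of its characteristic
polynomial has strictly negative real part. -/
def IsHurwitz {I : Type*} [Fintype I] [DecidableEq I] (A : Matrix I I ℝ) : Prop :=
  ∀ z : ℂ, ((A.map (Complex.ofReal)).charpoly).IsRoot z → z.re < 0

/-!
With `𝒫 = blockDiagonal' P` and `𝒲 = ofBlocks W`, the definition of `W` reads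
`Aᵀ 𝒫 + 𝒫 A = -𝒲`, so by Lyapunov's argument it suffices that `𝒲` is positive
definite: for an eigenpair `A v = λ v` over `ℂ`, the real part of `v* (Aᵀ 𝒫 + 𝒫 A) v` is
`2 Re λ · Re (v* 𝒫 v)`, while that of `-v* 𝒲 v` is negative.

The block Cholesky recursion is block `LDLᵀ` elimination: with `L` the block lower triangle
of `Ŵ` and `D = blockDiagonal' (Ŵ k k)`, one has `𝒲 = L D⁻¹ Lᵀ`. The pivots make `D⁻¹`
positive definite and `L` invertible, so `𝒲` is positive definite.
-/

namespace Matrix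

variable {I : Type*} [Fintype I]

theorem exists_mulVec_eq_smul_of_isRoot_charpoly [DecidableEq I] {K : Type*} [Field K]
    {M : Matrix I I K} {z : K} (hz : M.charpoly.IsRoot z) : ∃ v ≠ 0, M *ᵥ v = z • v := by
  rw [← mem_spectrum_iff_isRoot_charpoly, ← spectrum_toLin',
    ← Module.End.hasEigenvalue_iff_mem_spectrum] at hz
  obtain ⟨v, hv⟩ := hz.exists_hasEigenvector
  exact ⟨v, hv.2, hv.apply_eq_smul⟩

theorem re_star_dotProduct_map_ofReal_mulVec (M : Matrix I I ℝ) (v : I → ℂ) :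
    (star v ⬝ᵥ M.map Complex.ofReal *ᵥ v).re
      = (fun i => (v i).re) ⬝ᵥ M *ᵥ (fun i => (v i).re)
        + (fun i => (v i).im) ⬝ᵥ M *ᵥ (fun i => (v i).im) := by
  simp only [dotProduct, mulVec, Finset.mul_sum, ← Finset.sum_add_distrib, Complex.re_sum,
    Pi.star_apply, map_apply, Complex.mul_re, Complex.star_def, Complex.conj_re, Complex.conj_im,
    Complex.ofReal_re, Complex.ofReal_im, Complex.mul_im]
  refine Finset.sum_congr rfl fun i _ => Finset.sum_congr rfl fun j _ => ?_
  ring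

theorem PosDef.re_star_dotProduct_map_ofReal_mulVec_pos {M : Matrix I I ℝ} (hM : M.PosDef)
    {v : I → ℂ} (hv : v ≠ 0) : 0 < (star v ⬝ᵥ M.map Complex.ofReal *ᵥ v).re := by
  rw [re_star_dotProduct_map_ofReal_mulVec]
  have hre := hM.posSemidef.dotProduct_mulVec_nonneg fun i => (v i).re
  have him := hM.posSemidef.dotProduct_mulVec_nonneg fun i => (v i).im
  simp only [star_trivial] at hre him
  by_cases h : (fun i => (v i).re) = 0
  · have h' : (fun i => (v i).im) ≠ 0 := fun h' => hv <| funext fun i =>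
      Complex.ext (congrFun h i) (congrFun h' i)
    simpa using add_pos_of_nonneg_of_pos hre (hM.dotProduct_mulVec_pos h')
  · simpa using add_pos_of_pos_of_nonneg (hM.dotProduct_mulVec_pos h) him

section BlockDiagonal

variable {ι : Type*} [Fintype ι] [DecidableEq ι] {m : ι → Type*} [∀ i, Fintype (m i)]
  {R : Type*}

theorem blockDiagonal'_mulVec_apply [NonUnitalNonAssocSemiring R]
    (D : ∀ i, Matrix (m i) (m i) R) (x : (Σ i, m i) → R) (i : ι) (a : m i) :
    (blockDiagonal' D *ᵥ x) ⟨i, a⟩ = (D i *ᵥ fun b => x ⟨i, b⟩) a := by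
  simp only [mulVec, dotProduct, Fintype.sum_sigma]
  rw [Finset.sum_eq_single i (fun j _ hj => by simp [blockDiagonal'_apply_ne _ _ _ hj.symm])
    (by simp)]
  simp [blockDiagonal'_apply_eq]

theorem star_dotProduct_blockDiagonal'_mulVec [NonUnitalNonAssocSemiring R] [StarRing R]
    (D : ∀ i, Matrix (m i) (m i) R) (x : (Σ i, m i) → R) :
    star x ⬝ᵥ blockDiagonal' D *ᵥ x
      = ∑ i, star (fun b => x ⟨i, b⟩) ⬝ᵥ D i *ᵥ fun b => x ⟨i, b⟩ := by
  simp only [dotProduct, Fintype.sum_sigma, blockDiagonal'_mulVec_apply, Pi.star_apply]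

theorem PosDef.blockDiagonal' [Ring R] [PartialOrder R] [StarRing R]
    [IsOrderedCancelAddMonoid R]
    {D : ∀ i, Matrix (m i) (m i) R} (hD : ∀ i, (D i).PosDef) : (blockDiagonal' D).PosDef := by
  refine of_dotProduct_mulVec_pos ?_ fun x hx => ?_
  · rw [IsHermitian, blockDiagonal'_conjTranspose]
    exact congrArg _ (funext fun i => (hD i).isHermitian.eq)
  obtain ⟨⟨i, a⟩, hia⟩ := Function.ne_iff.mp hx
  rw [star_dotProduct_blockDiagonal'_mulVec]
  exact Finset.sum_pos' (fun j _ => (hD j).posSemidef.dotProduct_mulVec_nonneg _)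
    ⟨i, Finset.mem_univ _, (hD i).dotProduct_mulVec_pos (Function.ne_iff.mpr ⟨a, hia⟩)⟩

end BlockDiagonal

end Matrix

theorem isHurwitz_of_lyapunov {I : Type*} [Fintype I] [DecidableEq I] {B P Q : Matrix I I ℝ}
    (hP : P.PosDef) (hQ : Q.PosDef) (h : Bᵀ * P + P * B = -Q) : IsHurwitz B := by
  intro z hz
  obtain ⟨v, hv, hBv⟩ := exists_mulVec_eq_smul_of_isRoot_charpoly hz
  set Bc := B.map Complex.ofReal
  set Pc := P.map Complex.ofReal
  set p := star v ⬝ᵥ Pc *ᵥ v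
  have hBc : Bcᵀ = Bcᴴ := by ext; simp [Bc]
  have hlyap : Bcᵀ * Pc + Pc * Bc = -Q.map Complex.ofReal := by
    have := congrArg Complex.ofRealHom.mapMatrix h
    simp only [map_add, map_mul, map_neg, RingHom.mapMatrix_apply, transpose_map] at this
    exact this
  have hform : star v ⬝ᵥ (Bcᵀ * Pc + Pc * Bc) *ᵥ v = (z + starRingEnd ℂ z) * p := by
    rw [add_mulVec, dotProduct_add, ← mulVec_mulVec, ← mulVec_mulVec, dotProduct_mulVec, hBc,
      ← star_mulVec, hBv, mulVec_smul, dotProduct_smul, star_smul]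
    simp only [p, smul_dotProduct, smul_eq_mul, Complex.star_def]
    ring
  have hre : 2 * z.re * p.re = -(star v ⬝ᵥ Q.map Complex.ofReal *ᵥ v).re := by
    rw [← Complex.neg_re, ← dotProduct_neg, ← neg_mulVec, ← hlyap, hform, Complex.add_conj]
    simp
  nlinarith [hP.re_star_dotProduct_map_ofReal_mulVec_pos hv,
    hQ.re_star_dotProduct_map_ofReal_mulVec_pos hv]

section Blocks

variable {N : ℕ} {n : Fin N → ℕ}

theorem ofBlocks_transpose (X : ∀ i j : Fin N, Matrix (Fin (n i)) (Fin (n j)) ℝ) :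
    (ofBlocks X)ᵀ = ofBlocks fun i j => (X j i)ᵀ := rfl

theorem ofBlocks_mul (X Y : ∀ i j : Fin N, Matrix (Fin (n i)) (Fin (n j)) ℝ) :
    ofBlocks X * ofBlocks Y = ofBlocks fun i j => ∑ k, X i k * Y k j := by
  ext ⟨i, a⟩ ⟨j, b⟩
  simp [ofBlocks, mul_apply, Fintype.sum_sigma, Matrix.sum_apply]

theorem ofBlocks_mul_blockDiagonal' (X : ∀ i j : Fin N, Matrix (Fin (n i)) (Fin (n j)) ℝ)
    (D : ∀ i : Fin N, Matrix (Fin (n i)) (Fin (n i)) ℝ) :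
    ofBlocks X * blockDiagonal' D = ofBlocks fun i j => X i j * D j := by
  ext ⟨i, a⟩ ⟨j, b⟩
  simp only [ofBlocks, mul_apply, of_apply, Fintype.sum_sigma]
  rw [Finset.sum_eq_single j (fun k _ hk => by simp [blockDiagonal'_apply_ne _ _ _ hk]) (by simp)]
  simp [blockDiagonal'_apply_eq]

theorem blockDiagonal'_mul_ofBlocks (X : ∀ i j : Fin N, Matrix (Fin (n i)) (Fin (n j)) ℝ)
    (D : ∀ i : Fin N, Matrix (Fin (n i)) (Fin (n i)) ℝ) :
    blockDiagonal' D * ofBlocks X = ofBlocks fun i j => D i * X i j := by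
  ext ⟨i, a⟩ ⟨j, b⟩
  simp only [ofBlocks, mul_apply, of_apply, Fintype.sum_sigma]
  rw [Finset.sum_eq_single i (fun k _ hk => by simp [blockDiagonal'_apply_ne _ _ _ hk.symm])
    (by simp)]
  simp [blockDiagonal'_apply_eq]

theorem det_ofBlocks_of_upper {X : ∀ i j : Fin N, Matrix (Fin (n i)) (Fin (n j)) ℝ}
    (hX : ∀ i j, j < i → X i j = 0) : (ofBlocks X).det = ∏ k, (X k k).det := by
  have hblock : (ofBlocks X).BlockTriangular Sigma.fst := fun a b hab => by
    simp [ofBlocks, hX _ _ hab]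
  rw [hblock.det_fintype]
  refine Finset.prod_congr rfl fun k _ => ?_
  rw [← det_submatrix_equiv_self (Equiv.sigmaSubtype k).symm]
  rfl

theorem chol_eq_sub_sum (W : ∀ i j : Fin N, Matrix (Fin (n i)) (Fin (n j)) ℝ) (i j : Fin N) :
    chol W i j
      = W i j - ∑ k, if k < j then chol W i k * (chol W k k)⁻¹ * (chol W j k)ᵀ else 0 := by
  rw [chol]
  simp only [dite_eq_ite, Fin.val_fin_lt]

noncomputable def cholLower (W : ∀ i j : Fin N, Matrix (Fin (n i)) (Fin (n j)) ℝ)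
    (i k : Fin N) : Matrix (Fin (n i)) (Fin (n k)) ℝ :=
  if k ≤ i then chol W i k else 0

variable {W : ∀ i j : Fin N, Matrix (Fin (n i)) (Fin (n j)) ℝ}

theorem sum_cholLower_mul_of_le (hsymm : ∀ k, (chol W k k)ᵀ = chol W k k)
    (hdet : ∀ k, IsUnit (chol W k k).det) {i j : Fin N} (hji : j ≤ i) :
    ∑ k, cholLower W i k * (chol W k k)⁻¹ * (cholLower W j k)ᵀ = W i j := by
  have hterm : ∀ k, cholLower W i k * (chol W k k)⁻¹ * (cholLower W j k)ᵀ
      = (if k < j then chol W i k * (chol W k k)⁻¹ * (chol W j k)ᵀ else 0)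
        + if k = j then chol W i j else 0 := by
    intro k
    rcases lt_trichotomy k j with hk | rfl | hk
    · simp [cholLower, hk.le, hk.le.trans hji, hk, hk.ne]
    · simp [cholLower, hji, hsymm, nonsing_inv_mul_cancel_right _ _ (hdet k)]
    · simp [cholLower, hk.not_ge, hk.not_gt, hk.ne']
  rw [Finset.sum_congr rfl fun k _ => hterm k, Finset.sum_add_distrib, Finset.sum_ite_eq']
  simp [chol_eq_sub_sum W i j]

theorem sum_cholLower_mul (hW : ∀ i j, (W i j)ᵀ = W j i)
    (hsymm : ∀ k, (chol W k k)ᵀ = chol W k k) (hdet : ∀ k, IsUnit (chol W k k).det)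
    (i j : Fin N) :
    ∑ k, cholLower W i k * (chol W k k)⁻¹ * (cholLower W j k)ᵀ = W i j := by
  rcases le_total j i with hji | hij
  · exact sum_cholLower_mul_of_le hsymm hdet hji
  · rw [← hW j i, ← sum_cholLower_mul_of_le hsymm hdet hij, transpose_sum]
    simp [transpose_nonsing_inv, hsymm, Matrix.mul_assoc]

theorem ofBlocks_eq_cholLower_mul (hW : ∀ i j, (W i j)ᵀ = W j i)
    (hsymm : ∀ k, (chol W k k)ᵀ = chol W k k) (hdet : ∀ k, IsUnit (chol W k k).det) :
    ofBlocks W = ofBlocks (cholLower W) * blockDiagonal' (fun k => (chol W k k)⁻¹)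
      * (ofBlocks (cholLower W))ᵀ := by
  rw [ofBlocks_mul_blockDiagonal', ofBlocks_transpose, ofBlocks_mul]
  simp only [sum_cholLower_mul hW hsymm hdet]

theorem isUnit_ofBlocks_cholLower (hdet : ∀ k, IsUnit (chol W k k).det) :
    IsUnit (ofBlocks (cholLower W)) := by
  rw [isUnit_iff_isUnit_det, ← det_transpose, ofBlocks_transpose,
    det_ofBlocks_of_upper fun i j hji => by simp [cholLower, hji.not_ge]]
  simpa [cholLower, Finset.prod_ne_zero_iff] using hdet

theorem posDef_ofBlocks_of_posDef_chol (hW : ∀ i j, (W i j)ᵀ = W j i)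
    (hpiv : ∀ k, (chol W k k).PosDef) : (ofBlocks W).PosDef := by
  have hdet k : IsUnit (chol W k k).det := (isUnit_iff_isUnit_det _).mp (hpiv k).isUnit
  have hsymm k : (chol W k k)ᵀ = chol W k k := (isHermitian_iff_isSymm.mp (hpiv k).isHermitian).eq
  rw [ofBlocks_eq_cholLower_mul hW hsymm hdet, ← conjTranspose_eq_transpose_of_trivial]
  exact (PosDef.blockDiagonal' fun k => (hpiv k).inv).mul_mul_conjTranspose_same
    (vecMul_injective_iff_isUnit.mpr (isUnit_ofBlocks_cholLower hdet))

end Blocks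

/-- Decentralized stability analysis: if there are symmetric positive definite
`P i` such that all the block Cholesky pivots of the block matrix
`W i j = −A j iᵀ P j − P i ⬝ A i j` are positive definite, then the networked
system matrix `A` is Hurwitz. -/
theorem stmt13 {N : ℕ} {n : Fin N → ℕ}
    (A : ∀ i j : Fin N, Matrix (Fin (n i)) (Fin (n j)) ℝ)
    (P : ∀ i : Fin N, Matrix (Fin (n i)) (Fin (n i)) ℝ)
    (hP : ∀ i, (P i).PosDef)
    (hpiv : ∀ i : Fin N,
      (chol (fun i j => -((A j i)ᵀ * P j) - P i * A i j) i i).PosDef) :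
    IsHurwitz (ofBlocks A) := by
  set W : ∀ i j : Fin N, Matrix (Fin (n i)) (Fin (n j)) ℝ :=
    fun i j => -((A j i)ᵀ * P j) - P i * A i j
  have hPsymm i : (P i)ᵀ = P i := (isHermitian_iff_isSymm.mp (hP i).isHermitian).eq
  have hW i j : (W i j)ᵀ = W j i := by
    simp only [W, transpose_sub, transpose_neg, transpose_mul, transpose_transpose, hPsymm]
    abel
  refine isHurwitz_of_lyapunov (PosDef.blockDiagonal' hP)
    (posDef_ofBlocks_of_posDef_chol hW hpiv) ?_
  rw [ofBlocks_transpose, ofBlocks_mul_blockDiagonal', blockDiagonal'_mul_ofBlocks]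
  ext ⟨i, a⟩ ⟨j, b⟩
  simp only [ofBlocks, W, Matrix.add_apply, Matrix.neg_apply, Matrix.sub_apply, of_apply]
  ring
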